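/- Let T, S ∈ B_{A^{1/2}}(H) and λ ∈ [0,1]. If T is (A,λ)-Birkhoff–James orthogonal to S, i.e. ‖T + ξS‖_{(A,λ)} ≥ ‖T‖_{(A,λ)} for all ξ ∈ ℂ, then for each θ ∈ [0, 2π) there exists a sequence {x_n} of A-unit vectors such that lim_{n→∞}( λ‖Tx_n‖_A² + (1−λ)|⟨Tx_n,x_n⟩_A|² ) = ‖T‖_{(A,λ)}² and liminf_{n→∞} Re( e^{iθ}λ⟨Sx_n, Tx_n⟩_A + e^{iθ}(1−λ)⟨x_n, Tx_n⟩_A⟨Sx_n, x_n⟩_A ) ≥ 0. -/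

import Mathlib

open Filter Topology

variable {H : Type*}

/-- The `A`-semi-inner product, paper convention (linear in the first argument):
`⟨x, y⟩_A = ⟨Ax, y⟩`. -/
noncomputable def innA [NormedAddCommGroup H] [InnerProductSpace ℂ H]
    (A : H →L[ℂ] H) (x y : H) : ℂ :=
  @inner ℂ H _ y (A x)

/-- The seminorm `‖x‖_A = √⟨Ax, x⟩`. -/
noncomputable def normA [NormedAddCommGroup H] [InnerProductSpace ℂ H]
    (A : H →L[ℂ] H) (x : H) : ℝ :=
  Real.sqrt (innA A x x).re

/-- The quantity `√(λ‖Tx‖_A² + (1−λ)|⟨Tx,x⟩_A|²)`. -/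
noncomputable def qA [NormedAddCommGroup H] [InnerProductSpace ℂ H]
    (A : H →L[ℂ] H) (l : ℝ) (T : H →L[ℂ] H) (x : H) : ℝ :=
  Real.sqrt (l * normA A (T x) ^ 2 + (1 - l) * ‖innA A (T x) x‖ ^ 2)

/-- The seminorm `‖T‖_{(A,λ)}`. -/
noncomputable def semNormA [NormedAddCommGroup H] [InnerProductSpace ℂ H]
    (A : H →L[ℂ] H) (l : ℝ) (T : H →L[ℂ] H) : ℝ :=
  sSup {r : ℝ | ∃ x : H, normA A x = 1 ∧ r = qA A l T x}

/-!
Write `A = R²` with `R = A^{1/2}`. Then `‖x‖_A = ‖R x‖` and `⟨x, y⟩_A = ⟪R y, R x⟫`, so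
`q(T, x)² = λ‖T x‖_A² + (1 - λ)|⟨T x, x⟩_A|²` is quadratic in `T`:
`q(T + ξ S, x)² = q(T, x)² + 2 Re (ξ c(x)) + |ξ|² q(S, x)²` with `c = innLamA A λ T S`.

Take `ξₙ = tₙ e^{iθ}` with `tₙ ↓ 0`. Orthogonality gives an `A`-unit `xₙ` with
`q(T + ξₙ S, xₙ) > M - tₙ²`, where `M = ‖T‖_{(A,λ)}`, hence
`M² - O(tₙ²) ≤ q(T, xₙ)² + 2 tₙ Re (e^{iθ} c(xₙ))`. As `q(T, xₙ)² ≤ M²` and `c` is bounded, this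
forces `q(T, xₙ)² → M²` and `Re (e^{iθ} c(xₙ)) ≥ -O(tₙ)`.
-/

open scoped InnerProductSpace

section FirstOrderBound

variable {M C G : ℝ} {t p g : ℕ → ℝ}

theorem tendsto_of_first_order_bound (ht0 : ∀ n, 0 < t n) (ht : Tendsto t atTop (𝓝 0))
    (hp : ∀ n, p n ≤ M) (hg : ∀ n, g n ≤ G)
    (hpert : ∀ n, M - C * t n ^ 2 ≤ p n + 2 * t n * g n) :
    Tendsto p atTop (𝓝 M) := by
  have hlower : Tendsto (fun n => M - C * t n ^ 2 - 2 * t n * G) atTop (𝓝 M) := by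
    simpa using (tendsto_const_nhds.sub ((ht.pow 2).const_mul C)).sub
      ((ht.const_mul 2).mul_const G)
  refine tendsto_of_tendsto_of_tendsto_of_le_of_le hlower tendsto_const_nhds (fun n => ?_) hp
  nlinarith [hpert n, mul_le_mul_of_nonneg_left (hg n) (ht0 n).le]

theorem liminf_nonneg_of_first_order_bound (ht0 : ∀ n, 0 < t n) (ht : Tendsto t atTop (𝓝 0))
    (hp : ∀ n, p n ≤ M) (hg : ∀ n, g n ≤ G)
    (hpert : ∀ n, M - C * t n ^ 2 ≤ p n + 2 * t n * g n) :
    0 ≤ liminf g atTop := by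
  have hlower : ∀ n, -(C / 2 * t n) ≤ g n := fun n => by
    have h2 : 0 ≤ t n * (2 * g n + C * t n) := by nlinarith [hpert n, hp n]
    linarith [(mul_nonneg_iff_of_pos_left (ht0 n)).1 h2]
  have hlim : Tendsto (fun n => -(C / 2 * t n)) atTop (𝓝 0) := by
    simpa using (ht.const_mul (C / 2)).neg
  calc (0 : ℝ) = liminf (fun n => -(C / 2 * t n)) atTop := hlim.liminf_eq.symm
    _ ≤ liminf g atTop :=
      liminf_le_liminf (.of_forall hlower) hlim.isBoundedUnder_ge
        (isCoboundedUnder_ge_of_le _ hg)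

end FirstOrderBound

theorem sq_sub_two_mul_le_sq {M δ q : ℝ} (hM : 0 ≤ M) (h : M - δ ≤ q) :
    M ^ 2 - 2 * M * δ ≤ q ^ 2 := by
  rcases le_total δ M with hδ | hδ
  · nlinarith [pow_le_pow_left₀ (sub_nonneg.2 hδ) h 2, sq_nonneg δ]
  · nlinarith [mul_nonneg hM (sub_nonneg.2 hδ)]

section SemiInner

variable [NormedAddCommGroup H] [InnerProductSpace ℂ H] [CompleteSpace H] {A : H →L[ℂ] H}

theorem innA_eq_inner_sqrt (hA : A.IsPositive) (x y : H) :
    innA A x y = ⟪CFC.sqrt A y, CFC.sqrt A x⟫_ℂ := by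
  have hsq : CFC.sqrt A * CFC.sqrt A = A :=
    CFC.sqrt_mul_sqrt_self A ((A.nonneg_iff_isPositive).2 hA)
  have h := (IsSelfAdjoint.of_nonneg (CFC.sqrt_nonneg A)).isSymmetric y (CFC.sqrt A x)
  rw [ContinuousLinearMap.coe_coe, ← mul_apply_eq_comp, hsq] at h
  exact h.symm

theorem normA_eq_norm_sqrt (hA : A.IsPositive) (x : H) : normA A x = ‖CFC.sqrt A x‖ := by
  rw [normA, innA_eq_inner_sqrt hA, ← RCLike.re_eq_complex_re, inner_self_eq_norm_sq,
    Real.sqrt_sq (norm_nonneg _)]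

theorem norm_innA_le (hA : A.IsPositive) (x y : H) : ‖innA A x y‖ ≤ normA A x * normA A y := by
  rw [innA_eq_inner_sqrt hA, normA_eq_norm_sqrt hA, normA_eq_norm_sqrt hA, mul_comm]
  exact norm_inner_le_norm _ _

end SemiInner

theorem weighted_norm_add_smul_sq {E : Type*} [NormedAddCommGroup E] [InnerProductSpace ℂ E]
    (l : ℝ) (ξ : ℂ) (u v w : E) :
    l * ‖u + ξ • v‖ ^ 2 + (1 - l) * ‖⟪w, u + ξ • v⟫_ℂ‖ ^ 2 =
      l * ‖u‖ ^ 2 + (1 - l) * ‖⟪w, u⟫_ℂ‖ ^ 2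
        + 2 * (ξ * ((l : ℂ) * ⟪u, v⟫_ℂ + ((1 : ℂ) - (l : ℂ)) * ⟪u, w⟫_ℂ * ⟪w, v⟫_ℂ)).re
        + ‖ξ‖ ^ 2 * (l * ‖v‖ ^ 2 + (1 - l) * ‖⟪w, v⟫_ℂ‖ ^ 2) := by
  rw [norm_add_sq (𝕜 := ℂ), inner_add_right, inner_smul_right, inner_smul_right, norm_smul,
    mul_pow, ← inner_conj_symm w u]
  simp only [Complex.sq_norm, Complex.normSq_apply, Complex.mul_re, Complex.mul_im,
    Complex.add_re, Complex.add_im, Complex.sub_re, Complex.sub_im, Complex.ofReal_re,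
    Complex.ofReal_im, Complex.one_re, Complex.one_im, Complex.conj_re, Complex.conj_im,
    RCLike.re_to_complex]
  ring

section LambdaQuantities

variable [NormedAddCommGroup H] [InnerProductSpace ℂ H]

noncomputable def qASq (A : H →L[ℂ] H) (l : ℝ) (T : H →L[ℂ] H) (x : H) : ℝ :=
  l * normA A (T x) ^ 2 + (1 - l) * ‖innA A (T x) x‖ ^ 2

noncomputable def innLamA (A : H →L[ℂ] H) (l : ℝ) (T S : H →L[ℂ] H) (x : H) : ℂ :=
  (l : ℂ) * innA A (S x) (T x) + ((1 : ℂ) - (l : ℂ)) * innA A x (T x) * innA A (S x) x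

variable {A : H →L[ℂ] H} {l : ℝ} {T S : H →L[ℂ] H} {x : H}

theorem normA_nonneg : 0 ≤ normA A x := Real.sqrt_nonneg _

theorem qASq_nonneg (hl : l ∈ Set.Icc (0 : ℝ) 1) : 0 ≤ qASq A l T x :=
  add_nonneg (mul_nonneg hl.1 (sq_nonneg _)) (mul_nonneg (sub_nonneg.2 hl.2) (sq_nonneg _))

theorem qA_sq (hl : l ∈ Set.Icc (0 : ℝ) 1) : qA A l T x ^ 2 = qASq A l T x :=
  Real.sq_sqrt (qASq_nonneg hl)

theorem qA_le_semNormA (hbdd : BddAbove {r : ℝ | ∃ x : H, normA A x = 1 ∧ r = qA A l T x})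
    (hx : normA A x = 1) : qA A l T x ≤ semNormA A l T :=
  le_csSup hbdd ⟨x, hx, rfl⟩

theorem semNormA_nonneg : 0 ≤ semNormA A l T :=
  Real.sSup_nonneg <| by
    rintro _ ⟨_, _, rfl⟩
    exact Real.sqrt_nonneg _

theorem exists_lt_qA_of_lt_semNormA (hne : ∃ x : H, normA A x = 1) {r : ℝ}
    (hr : r < semNormA A l T) : ∃ x, normA A x = 1 ∧ r < qA A l T x := by
  obtain ⟨x₀, hx₀⟩ := hne
  obtain ⟨_, ⟨x, hx, rfl⟩, hlt⟩ := exists_lt_of_lt_csSup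
    (s := {r : ℝ | ∃ x : H, normA A x = 1 ∧ r = qA A l T x}) ⟨_, x₀, hx₀, rfl⟩ hr
  exact ⟨x, hx, hlt⟩

variable [CompleteSpace H]

theorem qASq_le_normA_sq (hA : A.IsPositive) (hl : l ∈ Set.Icc (0 : ℝ) 1) (hx : normA A x ≤ 1) :
    qASq A l T x ≤ normA A (T x) ^ 2 := by
  have hTx : ‖innA A (T x) x‖ ≤ normA A (T x) :=
    (norm_innA_le hA _ _).trans (mul_le_of_le_one_right normA_nonneg hx)
  have := pow_le_pow_left₀ (norm_nonneg _) hTx 2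
  unfold qASq
  nlinarith [hl.1, hl.2]

theorem qA_le_normA (hA : A.IsPositive) (hl : l ∈ Set.Icc (0 : ℝ) 1) (hx : normA A x ≤ 1) :
    qA A l T x ≤ normA A (T x) :=
  (Real.sqrt_le_sqrt (qASq_le_normA_sq hA hl hx)).trans_eq (Real.sqrt_sq normA_nonneg)

theorem norm_innLamA_le (hA : A.IsPositive) (hl : l ∈ Set.Icc (0 : ℝ) 1) (hx : normA A x ≤ 1) :
    ‖innLamA A l T S x‖ ≤ normA A (T x) * normA A (S x) := by
  have hST := norm_innA_le hA (S x) (T x)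
  have hxT : ‖innA A x (T x)‖ ≤ normA A (T x) :=
    (norm_innA_le hA _ _).trans (mul_le_of_le_one_left normA_nonneg hx)
  have hSx : ‖innA A (S x) x‖ ≤ normA A (S x) :=
    (norm_innA_le hA _ _).trans (mul_le_of_le_one_right normA_nonneg hx)
  calc ‖innLamA A l T S x‖
      ≤ l * ‖innA A (S x) (T x)‖ + (1 - l) * (‖innA A x (T x)‖ * ‖innA A (S x) x‖) := by
        have hl0 : ‖(l : ℂ)‖ = l := by rw [Complex.norm_real, Real.norm_of_nonneg hl.1]
        have hl1 : ‖(1 : ℂ) - (l : ℂ)‖ = 1 - l := by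
          rw [← Complex.ofReal_one, ← Complex.ofReal_sub, Complex.norm_real,
            Real.norm_of_nonneg (sub_nonneg.2 hl.2)]
        refine (norm_add_le _ _).trans_eq ?_
        rw [norm_mul, norm_mul, norm_mul, hl0, hl1, mul_assoc]
    _ ≤ l * (normA A (S x) * normA A (T x)) + (1 - l) * (normA A (T x) * normA A (S x)) := by
        have := hl.1
        have := sub_nonneg.2 hl.2
        have : 0 ≤ normA A (T x) := normA_nonneg
        gcongr
    _ = normA A (T x) * normA A (S x) := by ring

theorem qASq_add_smul (hA : A.IsPositive) (ξ : ℂ) :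
    qASq A l (T + ξ • S) x =
      qASq A l T x + 2 * (ξ * innLamA A l T S x).re + ‖ξ‖ ^ 2 * qASq A l S x := by
  simp only [qASq, innLamA, normA_eq_norm_sqrt hA, innA_eq_inner_sqrt hA,
    add_apply, smul_apply, map_add, map_smul]
  exact weighted_norm_add_smul_sq l ξ _ _ _

theorem bddAbove_qA (hA : A.IsPositive) (hl : l ∈ Set.Icc (0 : ℝ) 1)
    (hT : BddAbove {r : ℝ | ∃ x : H, normA A x = 1 ∧ r = normA A (T x)}) :
    BddAbove {r : ℝ | ∃ x : H, normA A x = 1 ∧ r = qA A l T x} := by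
  obtain ⟨C, hC⟩ := hT
  refine ⟨C, ?_⟩
  rintro _ ⟨x, hx, rfl⟩
  exact (qA_le_normA hA hl hx.le).trans (hC ⟨x, hx, rfl⟩)

theorem first_order_bound_of_lt_qA_add_smul (hA : A.IsPositive) (hl : l ∈ Set.Icc (0 : ℝ) 1)
    {M t K : ℝ} {ζ : ℂ} (hM : 0 ≤ M) (ht : 0 ≤ t) (hζ : ‖ζ‖ = 1) (hS : qASq A l S x ≤ K)
    (hlt : M - t ^ 2 < qA A l (T + ((t : ℂ) * ζ) • S) x) :
    M ^ 2 - (2 * M + K) * t ^ 2 ≤ qASq A l T x + 2 * t * (ζ * innLamA A l T S x).re := by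
  have h := sq_sub_two_mul_le_sq hM hlt.le
  rw [qA_sq hl, qASq_add_smul hA, mul_assoc (t : ℂ), Complex.re_ofReal_mul, norm_mul,
    Complex.norm_real, Real.norm_of_nonneg ht, hζ, mul_one] at h
  nlinarith [mul_le_mul_of_nonneg_left hS (sq_nonneg t)]

end LambdaQuantities

theorem exists_seq_of_BJ_orthogonal
    [NormedAddCommGroup H] [InnerProductSpace ℂ H] [CompleteSpace H]
    (A : H →L[ℂ] H) (hA : A.IsPositive) {l : ℝ} (hl : l ∈ Set.Icc (0 : ℝ) 1)
    (T S : H →L[ℂ] H) (hT : BddAbove {r : ℝ | ∃ x : H, normA A x = 1 ∧ r = normA A (T x)}) (hS : BddAbove {r : ℝ | ∃ x : H, normA A x = 1 ∧ r = normA A (S x)})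
    (hne : ∃ x : H, normA A x = 1)
    (horth : ∀ ξ : ℂ, semNormA A l T ≤ semNormA A l (T + ξ • S)) :
    ∀ θ ∈ Set.Ico (0 : ℝ) (2 * Real.pi),
      ∃ x : ℕ → H, (∀ n, normA A (x n) = 1) ∧
        Tendsto (fun n => l * normA A (T (x n)) ^ 2 + (1 - l) * ‖innA A (T (x n)) (x n)‖ ^ 2)
          atTop (𝓝 (semNormA A l T ^ 2)) ∧
        0 ≤ Filter.liminf (fun n => (Complex.exp (θ * Complex.I) * ((l : ℂ) * innA A (S (x n)) (T (x n)) + ((1 : ℂ) - (l : ℂ)) * innA A (x n) (T (x n)) * innA A (S (x n)) (x n))).re) atTop := by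
  intro θ _
  set ζ := Complex.exp (θ * Complex.I)
  have hζ : ‖ζ‖ = 1 := Complex.norm_exp_ofReal_mul_I θ
  have hbdd := bddAbove_qA hA hl hT
  obtain ⟨CT, hCT⟩ := hT
  obtain ⟨CS, hCS⟩ := hS
  set t : ℕ → ℝ := fun n => 1 / ((n : ℝ) + 1)
  have ht0 : ∀ n, 0 < t n := fun n => by positivity
  have ht : Tendsto t atTop (𝓝 0) := tendsto_one_div_add_atTop_nhds_zero_nat
  choose x hx hlt using fun n => exists_lt_qA_of_lt_semNormA hne
    ((sub_lt_self _ (pow_pos (ht0 n) 2)).trans_le (horth ((t n : ℂ) * ζ)))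
  have hp n : qASq A l T (x n) ≤ semNormA A l T ^ 2 := by
    rw [← qA_sq hl]
    exact pow_le_pow_left₀ (Real.sqrt_nonneg _) (qA_le_semNormA hbdd (hx n)) 2
  have hg n : (ζ * innLamA A l T S (x n)).re ≤ CT * CS :=
    calc _ ≤ ‖innLamA A l T S (x n)‖ := by
          simpa [hζ] using Complex.re_le_norm (ζ * innLamA A l T S (x n))
      _ ≤ normA A (T (x n)) * normA A (S (x n)) := norm_innLamA_le hA hl (hx n).le
      _ ≤ CT * CS := mul_le_mul (hCT ⟨_, hx n, rfl⟩) (hCS ⟨_, hx n, rfl⟩) normA_nonneg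
          (normA_nonneg.trans (hCT ⟨_, hx n, rfl⟩))
  have hpert n := first_order_bound_of_lt_qA_add_smul hA hl semNormA_nonneg (ht0 n).le hζ
    ((qASq_le_normA_sq hA hl (hx n).le).trans
      (pow_le_pow_left₀ normA_nonneg (hCS ⟨_, hx n, rfl⟩) 2)) (hlt n)
  exact ⟨x, hx, tendsto_of_first_order_bound ht0 ht hp hg hpert,
    liminf_nonneg_of_first_order_bound ht0 ht hp hg hpert⟩
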